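/- arXiv:1408.1178 — 2 statements merged into one kernel-verified Lean document; each statement's English description precedes it below -/
import Mathlib

section
/- Let n ≥ 2, m ≥ 2, and let X be a unit vector in V_{n,m}. Suppose that for some 1 ≤ a ≤ m−1 there exist a nonzero vector v ∈ V_{n,a} and c ∈ ℂ with |c| = 1 such that v = c · T_{m−a}(conj X) T_a(X) v, where conj X denotes the coordinatewise complex conjugate of X. Then c = 1 and X is periodic. -/
noncomputable section

/-- `Vnm n m` is the Hilbert space `ℓ²({1,…,n}^m)`, identified with `(ℂ^n)^{⊗m}`. -/
abbrev Vnm (n m : ℕ) : Type := EuclideanSpace ℂ (Fin m → Fin n)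

/-- The tensor product `x ⊗ y`, via `(x ⊗ y)_{JK} = x_J y_K`. -/
def tensV {n m l : ℕ} (x : Vnm n m) (y : Vnm n l) : Vnm n (m + l) :=
  WithLp.toLp 2 fun J => x (fun i => J (Fin.castAdd l i)) * y (fun i => J (Fin.natAdd m i))

/-- Re-indexing of a tensor along an equality of lengths. -/
def castV {n m m' : ℕ} (h : m = m') (z : Vnm n m) : Vnm n m' :=
  WithLp.toLp 2 fun J => z (fun i => J (Fin.cast h i))

/-- The tensor power `x^{⊗p}`. -/
def tpowV {n m : ℕ} (x : Vnm n m) (p : ℕ) : Vnm n (p * m) :=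
  WithLp.toLp 2 fun J => ∏ i : Fin p, x (fun t => J ⟨(i : ℕ) * m + (t : ℕ), by
    have h2 : (t : ℕ) < m := t.isLt
    have h1 : (i : ℕ) + 1 ≤ p := i.isLt
    have h3 : ((i : ℕ) + 1) * m = (i : ℕ) * m + m := by ring
    have h4 : ((i : ℕ) + 1) * m ≤ p * m := Nat.mul_le_mul_right m h1
    omega⟩)

/-- The coordinatewise complex conjugate. -/
def conjV {n m : ℕ} (z : Vnm n m) : Vnm n m := WithLp.toLp 2 fun J => starRingEnd ℂ (z J)

/-- A unit vector `z` is periodic if `z = x^{⊗p}` for some unit vector `x` and `p ≥ 2`;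
it is nonperiodic if it is not periodic. -/
def PeriodicV {n m : ℕ} (z : Vnm n m) : Prop :=
  ∃ (m' p : ℕ) (x : Vnm n m') (h : p * m' = m),
    ‖x‖ = 1 ∧ 2 ≤ p ∧ castV h (tpowV x p) = z

/-- The matricization of `z ∈ V_{n,b+a}` as an operator `V_{n,a} → V_{n,b}`,
`(T z) e_K = Σ_{|J|=b} z_{JK} e_J`. -/
def matT {n b a : ℕ} (z : Vnm n (b + a)) :
    EuclideanSpace ℂ (Fin a → Fin n) →L[ℂ] EuclideanSpace ℂ (Fin b → Fin n) :=
  LinearMap.toContinuousLinearMap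
    (Matrix.toEuclideanLin
      (Matrix.of fun (J : Fin b → Fin n) (K : Fin a → Fin n) => z (Fin.append J K)))

/-- The matricization `T_a(z) : V_{n,a} → V_{n,m-a}` of `z ∈ V_{n,m}`,
`T_a(z) e_K = Σ_{|J|=m−a} z_{JK} e_J`. -/
def Tmat {n m : ℕ} (a : ℕ) (h : a ≤ m) (z : Vnm n m) :
    EuclideanSpace ℂ (Fin a → Fin n) →L[ℂ] EuclideanSpace ℂ (Fin (m - a) → Fin n) :=
  matT (castV (by omega : m = (m - a) + a) z)

/-- `z` is indecomposable if it is not a tensor product of lower-degree tensors. -/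
def IndecomposableV {n m : ℕ} (z : Vnm n m) : Prop :=
  1 ≤ m ∧ ¬ ∃ (a b : ℕ) (h : a + b = m) (x : Vnm n a) (y : Vnm n b),
    1 ≤ a ∧ 1 ≤ b ∧ castV h (tensV x y) = z

/-- The iterated tensor product `x₁ ⊗ ⋯ ⊗ x_l` of homogeneous tensors of degrees `ms i`. -/
def bigTensV {n l : ℕ} (ms : Fin l → ℕ) (xs : ∀ i, Vnm n (ms i)) : Vnm n (∑ i, ms i) :=
  WithLp.toLp 2 fun J => ∏ i : Fin l, xs i (fun t => J ⟨(∑ j ∈ Finset.Iio i, ms j) + (t : ℕ), by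
    have h1 : (∑ j ∈ Finset.Iio i, ms j) + ms i ≤ ∑ j, ms j := by
      calc (∑ j ∈ Finset.Iio i, ms j) + ms i
          = ∑ j ∈ insert i (Finset.Iio i), ms j := by
            rw [Finset.sum_insert (by simp)]; ring
        _ ≤ ∑ j, ms j := Finset.sum_le_sum_of_subset (Finset.subset_univ _)
    have h2 : (t : ℕ) < ms i := t.isLt
    omega⟩)

/-- `z ⊠ y ∈ V_{nn',m}`: `(z ⊠ y)_L = z_J y_K` where `L = J ⊠ K` is given by the
pairing `l_t = n'·j_t + k_t` of `{0,…,n−1}×{0,…,n'−1}` with `{0,…,nn'−1}`. -/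
def boxTensV {n n' m : ℕ} (z : Vnm n m) (y : Vnm n' m) : Vnm (n * n') m :=
  WithLp.toLp 2 fun L =>
    z (fun t => ⟨(L t : ℕ) / n', by
        have h := (L t).isLt
        have hn' : 0 < n' := Nat.pos_of_ne_zero (by rintro rfl; simp at h)
        exact (Nat.div_lt_iff_lt_mul hn').mpr h⟩) *
    y (fun t => ⟨(L t : ℕ) % n', by
        have h := (L t).isLt
        have hn' : 0 < n' := Nat.pos_of_ne_zero (by rintro rfl; simp at h)
        exact Nat.mod_lt _ hn'⟩)

/-- `z * y := z^{⊗α} ⊠ y^{⊗β} ∈ V_{nn',d}` where `d = αm = βl` is the lcm of `m` and `l`. -/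
def starV {n n' m l : ℕ} (z : Vnm n m) (y : Vnm n' l) : Vnm (n * n') (Nat.lcm m l) :=
  boxTensV (castV (Nat.div_mul_cancel (Nat.dvd_lcm_left m l)) (tpowV z (Nat.lcm m l / m)))
    (castV (Nat.div_mul_cancel (Nat.dvd_lcm_right m l)) (tpowV y (Nat.lcm m l / l)))

/-- Conjugacy of homogeneous tensors: `z = y`, or `z = x₁ ⊗ x₂` and `y = x₂ ⊗ x₁`
for some unit vectors `x₁, x₂`. -/
def ConjVec {n m l : ℕ} (z : Vnm n m) (y : Vnm n l) : Prop :=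
  (∃ h : m = l, castV h z = y) ∨
    ∃ (a b : ℕ) (x₁ : Vnm n a) (x₂ : Vnm n b) (h₁ : a + b = m) (h₂ : b + a = l),
      ‖x₁‖ = 1 ∧ ‖x₂‖ = 1 ∧ castV h₁ (tensV x₁ x₂) = z ∧ castV h₂ (tensV x₂ x₁) = y

/-- A Cuntz family of order `n` on `H`: `Sᵢ* Sⱼ = δᵢⱼ 1` and `Σᵢ Sᵢ Sᵢ* = 1`. -/
def IsCuntzFamily {H : Type*} [NormedAddCommGroup H] [InnerProductSpace ℂ H]
    [CompleteSpace H] {n : ℕ} (S : Fin n → H →L[ℂ] H) : Prop :=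
  (∀ i j, (ContinuousLinearMap.adjoint (S i)).comp (S j) = if i = j then 1 else 0) ∧
    ∑ i, (S i).comp (ContinuousLinearMap.adjoint (S i)) = 1

/-- `S_J := S_{j₁} ∘ ⋯ ∘ S_{j_k}` for a word `J = (j₁,…,j_k)`, with `S_∅ = 1`. -/
def Sword {H : Type*} [NormedAddCommGroup H] [InnerProductSpace ℂ H]
    {ι : Type*} (S : ι → H →L[ℂ] H) : (k : ℕ) → (Fin k → ι) → (H →L[ℂ] H)
  | 0, _ => 1
  | (k + 1), J => (S (J 0)).comp (Sword S k (fun i => J i.succ))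

/-- `s(z) := Σ_{|J|=m} z_J S_J`. -/
def sop {H : Type*} [NormedAddCommGroup H] [InnerProductSpace ℂ H]
    {n m : ℕ} (S : Fin n → H →L[ℂ] H) (z : Vnm n m) : H →L[ℂ] H :=
  ∑ J : Fin m → Fin n, z J • Sword S m J



/-!
Write `b = m - a`. Both matricizations `T_a(X)` and `T_b(X̄)` have Hilbert–Schmidt norm
`‖X‖ = 1`, so `‖v‖ = ‖T_b(X̄) T_a(X) v‖ ≤ ‖T_a(X) v‖ ≤ ‖v‖`. Equality in the row-wise
Cauchy–Schwarz inequalities makes both matricizations rank one, which reads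
`X = ξ ⊗ η = c · η ⊗ ξ` for nonzero `ξ ∈ V_{n,b}`, `η ∈ V_{n,a}`.

As for commuting words (Lyndon–Schützenberger), such a relation forces `c = 1` and makes `ξ`, `η`
multiples of tensor powers of a single `x`: if `a < b`, then `ξ = η ⊗ ζ` with
`ζ ⊗ η = c · η ⊗ ζ`, so the Euclidean algorithm on the degrees ends at `a = b`, where `η` is a
multiple of `ξ`. Hence `X` is a multiple of `x^{⊗p}` with `p ≥ 2`, and rescaling `x` makes it a
unit vector.
-/

namespace Word

variable {α : Type*}

def shift (k : ℕ) (f : ℕ → α) : ℕ → α := fun t => f (k + t)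

def glue (k : ℕ) (f g : ℕ → α) : ℕ → α := fun t => if t < k then f t else g (t - k)

def extend {m : ℕ} (J : Fin m → α) (a₀ : α) : ℕ → α :=
  fun t => if h : t < m then J ⟨t, h⟩ else a₀

@[simp]
lemma shift_zero (f : ℕ → α) : shift 0 f = f := by
  funext t; simp [shift]

lemma shift_shift (k l : ℕ) (f : ℕ → α) : shift k (shift l f) = shift (l + k) f := by
  funext t; simp only [shift, Nat.add_assoc]

@[simp]
lemma shift_glue (k : ℕ) (f g : ℕ → α) : shift k (glue k f g) = g := by
  funext t; simp [shift, glue]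

lemma shift_glue_of_le {a k : ℕ} (h : a ≤ k) (f g : ℕ → α) :
    shift a (glue k f g) = glue (k - a) (shift a f) g := by
  funext t
  simp only [shift, glue]
  split_ifs <;> first | rfl | omega | (congr 1; omega)

lemma shift_glue_of_ge {a k : ℕ} (h : k ≤ a) (f g : ℕ → α) :
    shift a (glue k f g) = shift (a - k) g := by
  funext t
  simp only [shift, glue, if_neg (show ¬ a + t < k by omega)]
  congr 1; omega

lemma append_shift (f : ℕ → α) (a b : ℕ) :
    Fin.append (fun i : Fin b => f i) (fun i : Fin a => shift b f i) =
      fun i : Fin (b + a) => f i := by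
  funext i
  refine Fin.addCases (fun i => ?_) (fun i => ?_) i <;> simp [shift]

end Word

lemma Fin.sum_fun_append {α β : Type*} [Fintype α] [AddCommMonoid β] {a b : ℕ}
    (F : (Fin (a + b) → α) → β) : ∑ M, F M = ∑ J, ∑ K, F (Fin.append J K) := by
  rw [← (Fin.appendEquiv a b).sum_comp, Fintype.sum_prod_type]
  rfl

section CauchySchwarz

variable {𝕜 E ι : Type*} [RCLike 𝕜] [NormedAddCommGroup E] [InnerProductSpace 𝕜 E] [Fintype ι]

lemma sum_norm_inner_sq_le (r : ι → E) (v : E) :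
    ∑ i, ‖inner 𝕜 (r i) v‖ ^ 2 ≤ (∑ i, ‖r i‖ ^ 2) * ‖v‖ ^ 2 := by
  rw [Finset.sum_mul]
  gcongr with i
  rw [← mul_pow]
  gcongr
  exact norm_inner_le_norm _ _

lemma norm_inner_eq_of_sum_norm_inner_sq_ge (r : ι → E) (v : E)
    (h : (∑ i, ‖r i‖ ^ 2) * ‖v‖ ^ 2 ≤ ∑ i, ‖inner 𝕜 (r i) v‖ ^ 2) (i : ι) :
    ‖inner 𝕜 (r i) v‖ = ‖r i‖ * ‖v‖ := by
  have hle : ∀ i ∈ Finset.univ, ‖inner 𝕜 (r i) v‖ ^ 2 ≤ ‖r i‖ ^ 2 * ‖v‖ ^ 2 := fun i _ => by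
    rw [← mul_pow]; gcongr; exact norm_inner_le_norm _ _
  have hsum := le_antisymm (Finset.sum_le_sum hle) (by rwa [← Finset.sum_mul])
  have hi := (Finset.sum_eq_sum_iff_of_le hle).mp hsum i (Finset.mem_univ i)
  rwa [← mul_pow, sq_eq_sq₀ (norm_nonneg _) (by positivity)] at hi

end CauchySchwarz

namespace Matrix

variable {𝕜 ι κ : Type*} [RCLike 𝕜] [Fintype κ] [DecidableEq κ]

lemma toEuclideanLin_apply_eq_inner (A : Matrix ι κ 𝕜) (v : EuclideanSpace 𝕜 κ) (i : ι) :
    toEuclideanLin A v i =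
      inner 𝕜 (WithLp.toLp 2 fun j => star (A i j) : EuclideanSpace 𝕜 κ) v := by
  simp [PiLp.inner_apply, mulVec, dotProduct, mul_comm]

variable [Fintype ι]

lemma norm_toEuclideanLin_sq_le (A : Matrix ι κ 𝕜) (v : EuclideanSpace 𝕜 κ) :
    ‖toEuclideanLin A v‖ ^ 2 ≤ (∑ i, ∑ j, ‖A i j‖ ^ 2) * ‖v‖ ^ 2 := by
  simpa [EuclideanSpace.norm_sq_eq, toEuclideanLin_apply_eq_inner] using
    sum_norm_inner_sq_le (𝕜 := 𝕜) (fun i => (WithLp.toLp 2 fun j => star (A i j) :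
      EuclideanSpace 𝕜 κ)) v

lemma apply_eq_of_norm_le_norm_toEuclideanLin (A : Matrix ι κ 𝕜)
    (hA : ∑ i, ∑ j, ‖A i j‖ ^ 2 ≤ 1) {v : EuclideanSpace 𝕜 κ} (hv : v ≠ 0)
    (h : ‖v‖ ≤ ‖toEuclideanLin A v‖) (i : ι) (j : κ) :
    A i j = toEuclideanLin A v i * star (v j) / (‖v‖ ^ 2 : 𝕜) := by
  set r : ι → EuclideanSpace 𝕜 κ := fun i => WithLp.toLp 2 fun j => star (A i j)
  have hr : ∀ i, ‖r i‖ ^ 2 = ∑ j, ‖A i j‖ ^ 2 := fun i => by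
    simp [r, EuclideanSpace.norm_sq_eq]
  have hAv : ∀ i, toEuclideanLin A v i = inner 𝕜 (r i) v :=
    toEuclideanLin_apply_eq_inner A v
  have hge : (∑ i, ‖r i‖ ^ 2) * ‖v‖ ^ 2 ≤ ∑ i, ‖inner 𝕜 (r i) v‖ ^ 2 := by
    calc (∑ i, ‖r i‖ ^ 2) * ‖v‖ ^ 2 ≤ ‖v‖ ^ 2 := by
          simp only [hr]; nlinarith [sq_nonneg ‖v‖]
      _ ≤ ‖toEuclideanLin A v‖ ^ 2 := by gcongr
      _ = ∑ i, ‖inner 𝕜 (r i) v‖ ^ 2 := by simp [EuclideanSpace.norm_sq_eq, hAv]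
  have hcs : ‖inner 𝕜 v (r i)‖ = ‖v‖ * ‖r i‖ := by
    rw [norm_inner_symm, norm_inner_eq_of_sum_norm_inner_sq_ge r v hge i, mul_comm]
  have hri : v = 0 ∨ r i = (inner 𝕜 v (r i) / inner 𝕜 v v) • v :=
    ((norm_inner_eq_norm_tfae 𝕜 v (r i)).out 0 1).mp hcs
  replace hri := hri.resolve_left hv
  have hij : star (A i j) = inner 𝕜 v (r i) / inner 𝕜 v v * v j :=
    congrArg (fun w : EuclideanSpace 𝕜 κ => w j) hri
  rw [← star_star (A i j), hij, star_mul', star_div₀, RCLike.star_def, inner_conj_symm,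
    inner_conj_symm, inner_self_eq_norm_sq_to_K, hAv, div_mul_eq_mul_div]

end Matrix

namespace Vnm

open Word

variable {n : ℕ}

/-- Evaluating tensors of every degree on infinite words through their first letters turns tensor
products into products of evaluations and degree bookkeeping into shifts, without casts between
index types `Fin m → Fin n`. -/
def ev {m : ℕ} (z : Vnm n m) (f : ℕ → Fin n) : ℂ := z fun i => f i

lemma ev_congr {m : ℕ} (z : Vnm n m) {f g : ℕ → Fin n} (h : ∀ t < m, f t = g t) :
    ev z f = ev z g := by
  unfold ev; rw [show (fun i : Fin m => f i) = fun i : Fin m => g i from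
    funext fun i => h i i.isLt]

lemma ev_glue_of_le {m k : ℕ} (z : Vnm n m) (h : m ≤ k) (f g : ℕ → Fin n) :
    ev z (glue k f g) = ev z f :=
  ev_congr z fun t ht => if_pos (by omega)

@[simp] lemma ev_extend {m : ℕ} (z : Vnm n m) (J : Fin m → Fin n) (a₀ : Fin n) :
    ev z (extend J a₀) = z J := by
  simp [ev, extend]

@[simp] lemma ev_castV {m m' : ℕ} (h : m = m') (z : Vnm n m) (f : ℕ → Fin n) :
    ev (castV h z) f = ev z f := rfl

@[simp] lemma ev_smul {m : ℕ} (ρ : ℂ) (z : Vnm n m) (f : ℕ → Fin n) :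
    ev (ρ • z) f = ρ * ev z f := rfl

@[simp] lemma ev_zero {m : ℕ} (f : ℕ → Fin n) : ev (0 : Vnm n m) f = 0 := rfl

@[simp] lemma ev_conjV {m : ℕ} (z : Vnm n m) (f : ℕ → Fin n) :
    ev (conjV z) f = starRingEnd ℂ (ev z f) := rfl

lemma ev_tensV {m l : ℕ} (x : Vnm n m) (y : Vnm n l) (f : ℕ → Fin n) :
    ev (tensV x y) f = ev x f * ev y (shift m f) := rfl

lemma ev_tpowV {g : ℕ} (x : Vnm n g) (p : ℕ) (f : ℕ → Fin n) :
    ev (tpowV x p) f = ∏ i : Fin p, ev x (shift (i * g) f) := rfl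

lemma ev_tpowV_add {g : ℕ} (x : Vnm n g) (p q : ℕ) (f : ℕ → Fin n) :
    ev (tpowV x (p + q)) f = ev (tpowV x p) f * ev (tpowV x q) (shift (p * g) f) := by
  simp only [ev_tpowV, Fin.prod_univ_add, Fin.val_castAdd, Fin.val_natAdd, shift_shift,
    Nat.add_mul]

lemma ev_tpowV_one {g : ℕ} (x : Vnm n g) (f : ℕ → Fin n) : ev (tpowV x 1) f = ev x f := by
  simp [ev_tpowV]

lemma ev_tpowV_smul {g : ℕ} (ρ : ℂ) (x : Vnm n g) (p : ℕ) (f : ℕ → Fin n) :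
    ev (tpowV (ρ • x) p) f = ρ ^ p * ev (tpowV x p) f := by
  simp [ev_tpowV, Finset.prod_mul_distrib]

section NeZero

variable [NeZero n]

lemma ext_ev {m : ℕ} {y z : Vnm n m} (h : ∀ f, ev y f = ev z f) : y = z := by
  ext J
  simpa using h (extend J 0)

lemma exists_ev_ne_zero {m : ℕ} {z : Vnm n m} (hz : z ≠ 0) : ∃ f, ev z f ≠ 0 := by
  by_contra! h
  exact hz (ext_ev h)

lemma exists_ev_eq {m : ℕ} (F : (ℕ → Fin n) → ℂ)
    (hF : ∀ f g, (∀ t < m, f t = g t) → F f = F g) : ∃ z : Vnm n m, ∀ f, ev z f = F f :=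
  ⟨WithLp.toLp 2 fun J => F (extend J 0), fun f =>
    hF _ _ fun t ht => by simp [extend, ht]⟩

end NeZero

@[simp] lemma norm_castV {m m' : ℕ} (h : m = m') (z : Vnm n m) : ‖castV h z‖ = ‖z‖ := by
  subst h; rfl

@[simp] lemma norm_conjV {m : ℕ} (z : Vnm n m) : ‖conjV z‖ = ‖z‖ := by
  simp [EuclideanSpace.norm_eq, conjV]

lemma norm_tensV {m l : ℕ} (x : Vnm n m) (y : Vnm n l) : ‖tensV x y‖ = ‖x‖ * ‖y‖ := by
  rw [← sq_eq_sq₀ (norm_nonneg _) (by positivity), mul_pow, EuclideanSpace.norm_sq_eq,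
    EuclideanSpace.norm_sq_eq, EuclideanSpace.norm_sq_eq, Fintype.sum_mul_sum, Fin.sum_fun_append]
  simp [tensV, mul_pow]

lemma norm_tpowV [NeZero n] {g : ℕ} (x : Vnm n g) (p : ℕ) : ‖tpowV x p‖ = ‖x‖ ^ p := by
  induction p with
  | zero => simp [EuclideanSpace.norm_eq, tpowV]
  | succ p ih =>
    have h : tpowV x (p + 1) = castV (by ring) (tensV (tpowV x p) x) :=
      ext_ev fun f => by rw [ev_tpowV_add, ev_tpowV_one, ev_castV, ev_tensV]
    rw [h, norm_castV, norm_tensV, ih, pow_succ]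

variable {a b : ℕ}

lemma sum_norm_sq_append (z : Vnm n (b + a)) :
    ∑ J, ∑ K, ‖z (Fin.append J K)‖ ^ 2 = ‖z‖ ^ 2 := by
  rw [EuclideanSpace.norm_sq_eq, Fin.sum_fun_append]

lemma norm_matT_apply_le (z : Vnm n (b + a)) (u : Vnm n a) : ‖matT z u‖ ≤ ‖z‖ * ‖u‖ := by
  rw [← sq_le_sq₀ (norm_nonneg _) (by positivity), mul_pow, ← sum_norm_sq_append]
  exact Matrix.norm_toEuclideanLin_sq_le _ u

lemma ev_eq_of_norm_le_norm_matT (z : Vnm n (b + a)) (hz : ‖z‖ ≤ 1) {u : Vnm n a} (hu : u ≠ 0)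
    (h : ‖u‖ ≤ ‖matT z u‖) (f : ℕ → Fin n) :
    ev z f = ev (matT z u) f * starRingEnd ℂ (ev u (shift b f)) / (‖u‖ ^ 2 : ℂ) := by
  have hA : ∑ J, ∑ K, ‖z (Fin.append J K)‖ ^ 2 ≤ 1 := by
    rw [sum_norm_sq_append]; nlinarith [norm_nonneg z]
  have := Matrix.apply_eq_of_norm_le_norm_toEuclideanLin _ hA hu h (fun i : Fin b => f i)
    (fun i : Fin a => shift b f i)
  simp only [append_shift] at this
  exact this

lemma exists_factors_of_eq_smul_Tmat {m a : ℕ} (ha : a ≤ m) {X : Vnm n m} (hX : ‖X‖ ≤ 1)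
    {v : Vnm n a} (hv : v ≠ 0) {c : ℂ} (hc : ‖c‖ = 1)
    (heq : v = c • castV (Nat.sub_sub_self ha)
      (Tmat (m - a) (Nat.sub_le m a) (conjV X) (Tmat a ha X v))) :
    ∃ (ξ : Vnm n (m - a)) (η : Vnm n a), ξ ≠ 0 ∧ η ≠ 0 ∧
      (∀ f, ev X f = ev ξ f * ev η (shift (m - a) f)) ∧
      ∀ f, ev X f = c * (ev η f * ev ξ (shift a f)) := by
  set w := Tmat a ha X v
  set u := Tmat (m - a) (Nat.sub_le m a) (conjV X) w
  have hw_le : ‖w‖ ≤ ‖v‖ := (norm_matT_apply_le _ v).trans <| by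
    rw [norm_castV]; nlinarith [norm_nonneg v]
  have hu_le : ‖u‖ ≤ ‖w‖ := (norm_matT_apply_le _ w).trans <| by
    rw [norm_castV, norm_conjV]; nlinarith [norm_nonneg w]
  have hvu : ‖v‖ = ‖u‖ := by
    conv_lhs => rw [heq]
    rw [norm_smul, hc, one_mul, norm_castV]
  have hwv : ‖w‖ = ‖v‖ := by linarith
  have hv0 : (‖v‖ : ℂ) ≠ 0 := by exact_mod_cast norm_ne_zero_iff.mpr hv
  have hw : w ≠ 0 := norm_ne_zero_iff.mp (by rw [hwv]; exact norm_ne_zero_iff.mpr hv)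
  have hXw : ∀ f, ev X f = ev w f * starRingEnd ℂ (ev v (shift (m - a) f)) / (‖v‖ ^ 2 : ℂ) :=
    ev_eq_of_norm_le_norm_matT (castV (by omega : m = (m - a) + a) X)
      (by rwa [norm_castV]) hv (show ‖v‖ ≤ ‖w‖ from hwv.ge)
  have hXu : ∀ f, starRingEnd ℂ (ev X f) =
      ev u f * starRingEnd ℂ (ev w (shift (m - (m - a)) f)) / (‖w‖ ^ 2 : ℂ) :=
    ev_eq_of_norm_le_norm_matT (castV (by omega : m = (m - (m - a)) + (m - a)) (conjV X))
      (by rwa [norm_castV, norm_conjV]) hw (show ‖w‖ ≤ ‖u‖ by rw [← hvu, hwv])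
  simp only [Nat.sub_sub_self ha, hwv] at hXu
  have hu_ev : ∀ f, ev u f = starRingEnd ℂ c * ev v f := fun f => by
    rw [← Complex.inv_eq_conj hc, eq_inv_mul_iff_mul_eq₀ (norm_ne_zero_iff.mp (by simp [hc]))]
    conv_rhs => rw [heq]
    rfl
  refine ⟨(‖v‖⁻¹ : ℂ) • w, (‖v‖⁻¹ : ℂ) • conjV v, smul_ne_zero (inv_ne_zero hv0) hw,
    smul_ne_zero (inv_ne_zero hv0) ?_, fun f => ?_, fun f => ?_⟩
  · rwa [← norm_ne_zero_iff, norm_conjV, norm_ne_zero_iff]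
  · rw [hXw f, ev_smul, ev_smul, ev_conjV]
    field_simp
  · rw [← Complex.conj_conj (ev X f), hXu f, hu_ev, ev_smul, ev_smul, ev_conjV]
    simp only [map_div₀, map_mul, map_pow, Complex.conj_conj, Complex.conj_ofReal]
    field_simp

def IsScaledTPow {m g : ℕ} (z : Vnm n m) (x : Vnm n g) (p : ℕ) : Prop :=
  p * g = m ∧ ∃ θ : ℂ, ∀ f, ev z f = θ * ev (tpowV x p) f

lemma IsScaledTPow.of_ev_eq_mul {a b d g p q : ℕ} {z : Vnm n b} {y : Vnm n a} {y' : Vnm n d}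
    {x : Vnm n g} (hy : IsScaledTPow y x p) (hy' : IsScaledTPow y' x q) (hb : a + d = b)
    (h : ∀ f, ev z f = ev y f * ev y' (shift a f)) : IsScaledTPow z x (p + q) := by
  obtain ⟨hp, θ, hθ⟩ := hy
  obtain ⟨hq, θ', hθ'⟩ := hy'
  refine ⟨by rw [Nat.add_mul, hp, hq, hb], θ * θ', fun f => ?_⟩
  rw [h, hθ, hθ', ev_tpowV_add, show shift (p * g) f = shift a f by rw [hp]]
  ring

/-- `ξ ⊗ η = c • η ⊗ ξ`. -/
def TensCommute {a b : ℕ} (c : ℂ) (ξ : Vnm n b) (η : Vnm n a) : Prop :=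
  ∀ f, ev ξ f * ev η (shift b f) = c * (ev η f * ev ξ (shift a f))

variable {a b : ℕ} {c : ℂ}

lemma TensCommute.symm {ξ : Vnm n b} {η : Vnm n a} (hc : c ≠ 0) (h : TensCommute c ξ η) :
    TensCommute c⁻¹ η ξ := fun f => by
  rw [h f]; field_simp

variable [NeZero n]

lemma TensCommute.eq_one_of_same_degree {ξ η : Vnm n a} (hξ : ξ ≠ 0) (hη : η ≠ 0)
    (h : TensCommute c ξ η) : c = 1 ∧ ∃ θ : ℂ, ∀ f, ev η f = θ * ev ξ f := by
  have h' : ∀ f g, ev ξ f * ev η g = c * (ev η f * ev ξ g) := fun f g => by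
    simpa [ev_glue_of_le _ le_rfl] using h (glue a f g)
  obtain ⟨f₀, hf₀⟩ := exists_ev_ne_zero hξ
  obtain ⟨f₁, hf₁⟩ := exists_ev_ne_zero hη
  have hηf₀ : ev η f₀ ≠ 0 := by
    intro h0
    have := h' f₀ f₁
    rw [h0, zero_mul, mul_zero] at this
    exact mul_ne_zero hf₀ hf₁ this
  have hc1 : c = 1 := by
    have := h' f₀ f₀
    exact (mul_left_eq_self₀.mp (by linear_combination -this)).resolve_right
      (mul_ne_zero hf₀ hηf₀)
  refine ⟨hc1, ev η f₀ / ev ξ f₀, fun f => ?_⟩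
  have := h' f f₀
  rw [hc1] at this
  field_simp
  linear_combination -this

lemma TensCommute.exists_factor {d : ℕ} {ξ : Vnm n (a + d)} {η : Vnm n a} (hη : η ≠ 0)
    (h : TensCommute c ξ η) :
    ∃ ζ : Vnm n d, (∀ f, ev ξ f = ev η f * ev ζ (shift a f)) ∧ TensCommute c ζ η := by
  obtain ⟨f₀, hf₀⟩ := exists_ev_ne_zero hη
  obtain ⟨ζ, hζ⟩ := exists_ev_eq (m := d) (fun g => c * ev ξ (glue d g f₀) / ev η f₀)
    fun g g' hgg' => by
      rw [ev_congr ξ fun t _ => show glue d g f₀ t = glue d g' f₀ t by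
        unfold glue; split_ifs with ht; exacts [hgg' t ht, rfl]]
  have hfact : ∀ f, ev ξ f = ev η f * ev ζ (shift a f) := fun f => by
    have := h (glue (a + d) f f₀)
    rw [ev_glue_of_le _ le_rfl, shift_glue, ev_glue_of_le _ (by omega),
      shift_glue_of_le (by omega), Nat.add_sub_cancel_left] at this
    rw [hζ]
    field_simp
    linear_combination this
  refine ⟨ζ, hfact, fun f => mul_left_cancel₀ hf₀ ?_⟩
  have := h (glue a f₀ f)
  rw [hfact, ev_glue_of_le _ le_rfl, shift_glue, shift_glue_of_ge (by omega),
    Nat.add_sub_cancel_left, hfact f] at this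
  linear_combination this

theorem TensCommute.eq_one_and_exists_common_root (ha : 0 < a) (hb : 0 < b) (hc : c ≠ 0)
    {ξ : Vnm n b} {η : Vnm n a} (hξ : ξ ≠ 0) (hη : η ≠ 0) (h : TensCommute c ξ η) :
    c = 1 ∧ ∃ (g : ℕ) (x : Vnm n g) (p q : ℕ), IsScaledTPow ξ x p ∧ IsScaledTPow η x q := by
  obtain ⟨N, hN⟩ : ∃ N, a + b = N := ⟨_, rfl⟩
  induction N using Nat.strong_induction_on generalizing a b c with
  | _ N ih =>
  wlog hab : a ≤ b generalizing a b c
  · obtain ⟨hc1, g, x, p, q, hηx, hξx⟩ :=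
      this hb ha (inv_ne_zero hc) hη hξ (h.symm hc) (by omega) (by omega)
    exact ⟨inv_eq_one.mp hc1, g, x, q, p, hξx, hηx⟩
  rcases hab.eq_or_lt with rfl | hlt
  · obtain ⟨hc1, θ, hθ⟩ := h.eq_one_of_same_degree hξ hη
    exact ⟨hc1, a, ξ, 1, 1, ⟨one_mul a, 1, fun f => by rw [ev_tpowV_one, one_mul]⟩,
      ⟨one_mul a, θ, fun f => by rw [hθ, ev_tpowV_one]⟩⟩
  · obtain ⟨d, rfl⟩ := Nat.exists_eq_add_of_le hab
    obtain ⟨ζ, hfact, hζη⟩ := h.exists_factor hη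
    have hζ : ζ ≠ 0 := by
      rintro rfl
      exact hξ (ext_ev fun f => by simp [hfact])
    obtain ⟨hc1, g, x, p, q, hζx, hηx⟩ := ih (a + d) (by omega) ha (by omega) hc hζ hη hζη rfl
    exact ⟨hc1, g, x, q + p, q, hηx.of_ev_eq_mul hζx rfl hfact, hηx⟩

lemma periodicV_of_isScaledTPow {m g p : ℕ} {X : Vnm n m} (hX : ‖X‖ = 1) {x : Vnm n g}
    (hp : 2 ≤ p) (h : IsScaledTPow X x p) : PeriodicV X := by
  obtain ⟨hpg, θ, hθ⟩ := h
  obtain ⟨ρ, hρ⟩ := IsAlgClosed.exists_pow_nat_eq θ (by omega : 0 < p)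
  have hX' : castV hpg (tpowV (ρ • x) p) = X :=
    ext_ev fun f => by rw [ev_castV, ev_tpowV_smul, hρ, hθ]
  refine ⟨g, p, ρ • x, hpg, ?_, hp, hX'⟩
  have hnorm := congrArg norm hX'
  rw [norm_castV, norm_tpowV, hX] at hnorm
  exact (pow_eq_one_iff_of_nonneg (norm_nonneg _) (by omega)).mp hnorm

end Vnm

/-- if moreover `X = Y`, i.e. `v = c · T_{m−a}(conj X) T_a(X) v` with
`v ≠ 0`, `|c| = 1`, then `c = 1` and `X` is periodic. -/
theorem subCuntz_stmt5 {n m a : ℕ} (hn : 2 ≤ n)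
    (ha1 : 1 ≤ a) (ha2 : a ≤ m - 1)
    (X : Vnm n m) (hX : ‖X‖ = 1)
    (v : Vnm n a) (hv : v ≠ 0) (c : ℂ) (hc : ‖c‖ = 1)
    (heq : v = c • castV (by omega : m - (m - a) = a)
      (Tmat (m - a) (by omega) (conjV X) (Tmat a (by omega) X v))) :
    c = 1 ∧ PeriodicV X := by
  have : NeZero n := ⟨by omega⟩
  obtain ⟨ξ, η, hξ, hη, hXξη, hXηξ⟩ :=
    Vnm.exists_factors_of_eq_smul_Tmat (by omega) hX.le hv hc heq
  have hcomm : Vnm.TensCommute c ξ η := fun f => (hXξη f).symm.trans (hXηξ f)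
  obtain ⟨hc1, g, x, p, q, hξx, hηx⟩ := hcomm.eq_one_and_exists_common_root (by omega) (by omega)
    (by rintro rfl; simp at hc) hξ hη
  have hp : p ≠ 0 := by rintro rfl; have := hξx.1; omega
  have hq : q ≠ 0 := by rintro rfl; have := hηx.1; omega
  exact ⟨hc1, Vnm.periodicV_of_isScaledTPow hX (by omega) (hξx.of_ev_eq_mul hηx (by omega) hXξη)⟩
end
end

section
/- Let n ≥ 2, let x be a unit vector in V_{n,m} and y a unit vector in V_{n,l}, and suppose y ⊗ x = c · (x ⊗ y) for some c ∈ ℂ with |c| = 1. Then there exist a ≥ 1, a unit vector w ∈ V_{n,a}, integers f₁, f₂ ≥ 1, and γ₁, γ₂ ∈ ℂ with |γ₁| = |γ₂| = 1, such that x = γ₁ w^{⊗f₁} and y = γ₂ w^{⊗f₂}. In particular, x ⊗ y is periodic and c = 1. -/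
noncomputable section

/-!
Euclid's algorithm on the degrees. If `y ⊗ x = c · (x ⊗ y)` with `deg x < deg y`, comparing the
coordinates of both sides at words `A ++ B ++ C` with `x_C ≠ 0` shows `y = x ⊗ y'`, and cancelling
`x` on the left gives `y' ⊗ x = c · (x ⊗ y')` in lower total degree. When the degrees are equal,
`y` is a multiple of `x` and then `c = 1`. Unwinding, `x` and `y` are multiples of powers of a
common unit vector `w`, so `x ⊗ y = γ · w^{⊗(f₁+f₂)} = (ρ w)^{⊗(f₁+f₂)}` with `ρ^{f₁+f₂} = γ`.
-/

section

variable {n : ℕ}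

@[simp]
lemma castV_apply {m m' : ℕ} (h : m = m') (z : Vnm n m) (J : Fin m' → Fin n) :
    castV h z J = z (J ∘ Fin.cast h) := rfl

@[simp]
lemma castV_self {m : ℕ} (h : m = m) (z : Vnm n m) : castV h z = z := rfl

@[simp]
lemma castV_castV {m m' m'' : ℕ} (h : m = m') (h' : m' = m'') (z : Vnm n m) :
    castV h' (castV h z) = castV (h.trans h') z := by
  subst h h'; rfl

lemma castV_injective {m m' : ℕ} (h : m = m') : Function.Injective (castV (n := n) h) := by
  subst h; exact fun _ _ => id

lemma castV_smul {m m' : ℕ} (h : m = m') (c : ℂ) (z : Vnm n m) :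
    castV h (c • z) = c • castV h z := by
  subst h; rfl

@[simp]
lemma norm_castV {m m' : ℕ} (h : m = m') (z : Vnm n m) : ‖castV h z‖ = ‖z‖ := by
  subst h; rfl

lemma Vnm.exists_apply_ne_zero {m : ℕ} {z : Vnm n m} (hz : z ≠ 0) : ∃ J, z J ≠ 0 := by
  by_contra! h
  exact hz (PiLp.ext h)

lemma Vnm.ext_append {m l : ℕ} {z z' : Vnm n (m + l)}
    (h : ∀ A B, z (Fin.append A B) = z' (Fin.append A B)) : z = z' := by
  ext J
  rw [← Fin.append_castAdd_natAdd (f := J)]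
  exact h _ _

@[simp]
lemma tensV_append {m l : ℕ} (x : Vnm n m) (y : Vnm n l) (A : Fin m → Fin n)
    (B : Fin l → Fin n) : tensV x y (Fin.append A B) = x A * y B := by
  simp [tensV]

lemma castV_append_append {a b d : ℕ} (h : a + (b + d) = a + b + d) (z : Vnm n (a + (b + d)))
    (A : Fin a → Fin n) (B : Fin b → Fin n) (D : Fin d → Fin n) :
    castV h z (Fin.append (Fin.append A B) D) = z (Fin.append A (Fin.append B D)) := by
  simp only [castV_apply, Fin.append_assoc]
  rfl

lemma tensV_assoc {a b d : ℕ} (x : Vnm n a) (y : Vnm n b) (z : Vnm n d) :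
    tensV (tensV x y) z = castV (Nat.add_assoc a b d).symm (tensV x (tensV y z)) :=
  Vnm.ext_append fun AB D => by
    rw [← Fin.append_castAdd_natAdd (f := AB), castV_append_append]
    simp [mul_assoc]

lemma tensV_castV_right {m l l' : ℕ} (x : Vnm n m) (h : l = l') (y : Vnm n l) :
    tensV x (castV h y) = castV (by rw [h]) (tensV x y) := by
  subst h; rfl

lemma tensV_smul_left {m l : ℕ} (c : ℂ) (x : Vnm n m) (y : Vnm n l) :
    tensV (c • x) y = c • tensV x y :=
  Vnm.ext_append fun A B => by simp [mul_assoc]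

lemma tensV_smul_right {m l : ℕ} (c : ℂ) (x : Vnm n m) (y : Vnm n l) :
    tensV x (c • y) = c • tensV x y :=
  Vnm.ext_append fun A B => by simp [mul_left_comm]

lemma norm_tensV {m l : ℕ} (x : Vnm n m) (y : Vnm n l) : ‖tensV x y‖ = ‖x‖ * ‖y‖ := by
  have hsq : ‖tensV x y‖ ^ 2 = (‖x‖ * ‖y‖) ^ 2 := by
    rw [mul_pow, EuclideanSpace.norm_sq_eq, EuclideanSpace.norm_sq_eq,
      EuclideanSpace.norm_sq_eq, Finset.sum_mul_sum, ← Fintype.sum_prod_type',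
      ← (Fin.appendEquiv m l).sum_comp]
    refine Finset.sum_congr rfl fun AB _ => ?_
    change ‖tensV x y (Fin.append AB.1 AB.2)‖ ^ 2 = _
    rw [tensV_append, norm_mul, mul_pow]
  exact (pow_left_inj₀ (norm_nonneg _) (by positivity) two_ne_zero).mp hsq

lemma tensV_left_injective {m l : ℕ} {x : Vnm n m} (hx : x ≠ 0) :
    Function.Injective (tensV (l := l) x) := by
  intro u v huv
  obtain ⟨A, hA⟩ := Vnm.exists_apply_ne_zero hx
  ext B
  simpa [hA] using congrArg (· (Fin.append A B)) huv

lemma tensV_tpowV_tpowV {a : ℕ} (w : Vnm n a) (p q : ℕ) :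
    tensV (tpowV w p) (tpowV w q) = castV (Nat.add_mul p q a) (tpowV w (p + q)) :=
  Vnm.ext_append fun A B => by
    simp only [tensV_append, castV_apply, tpowV, Fin.prod_univ_add]
    congr 1 <;> refine Finset.prod_congr rfl fun i _ => congrArg w (funext fun t => ?_)
    · have hlt : (i : ℕ) * a + t < p * a := by nlinarith [i.isLt, t.isLt]
      exact (Fin.append_left A B ⟨_, hlt⟩).symm.trans (congrArg _ (Fin.ext (by simp)))
    · have hlt : (i : ℕ) * a + t < q * a := by nlinarith [i.isLt, t.isLt]
      refine (Fin.append_right A B ⟨_, hlt⟩).symm.trans (congrArg _ (Fin.ext ?_))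
      simp only [Fin.val_natAdd, Fin.val_cast]
      ring

lemma castV_tpowV_one {a : ℕ} (w : Vnm n a) : castV (Nat.one_mul a) (tpowV w 1) = w := by
  ext J
  simp [tpowV]

lemma tpowV_smul {a : ℕ} (c : ℂ) (w : Vnm n a) (p : ℕ) :
    tpowV (c • w) p = c ^ p • tpowV w p := by
  ext J
  simp [tpowV, Finset.prod_mul_distrib]

lemma norm_tpowV {a : ℕ} (w : Vnm n a) (p : ℕ) : ‖tpowV w p‖ = ‖w‖ ^ p := by
  induction p with
  | zero => simp [EuclideanSpace.norm_eq, tpowV]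
  | succ p ih =>
    rw [← norm_castV (Nat.add_mul p 1 a), ← tensV_tpowV_tpowV, norm_tensV, ih,
      ← norm_castV (Nat.one_mul a), castV_tpowV_one, pow_succ]

lemma norm_smul_castV_tpowV {a m f : ℕ} {w : Vnm n a} (hw : ‖w‖ = 1) (γ : ℂ) (h : f * a = m) :
    ‖γ • castV h (tpowV w f)‖ = ‖γ‖ := by
  rw [norm_smul, norm_castV, norm_tpowV, hw, one_pow, mul_one]

lemma tensV_smul_castV_tpowV {a m l f₁ f₂ : ℕ} (w : Vnm n a) (γ₁ γ₂ : ℂ) (h₁ : f₁ * a = m)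
    (h₂ : f₂ * a = l) :
    tensV (γ₁ • castV h₁ (tpowV w f₁)) (γ₂ • castV h₂ (tpowV w f₂)) =
      (γ₁ * γ₂) • castV (by rw [← h₁, ← h₂, Nat.add_mul]) (tpowV w (f₁ + f₂)) := by
  subst h₁ h₂
  rw [tensV_smul_left, tensV_smul_right, castV_self, castV_self, tensV_tpowV_tpowV, smul_smul]

lemma periodicV_smul_castV_tpowV {a m f : ℕ} {w : Vnm n a} (hw : ‖w‖ = 1) {γ : ℂ}
    (hγ : ‖γ‖ = 1) (h : f * a = m) (hf : 2 ≤ f) : PeriodicV (γ • castV h (tpowV w f)) := by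
  obtain ⟨ρ, hρ⟩ := IsAlgClosed.exists_pow_nat_eq γ (by omega : 0 < f)
  have hρ1 : ‖ρ‖ = 1 := by
    rw [← pow_eq_one_iff_of_nonneg (norm_nonneg ρ) (by omega : f ≠ 0), ← norm_pow, hρ, hγ]
  refine ⟨a, f, ρ • w, h, by rw [norm_smul, hρ1, hw, one_mul], hf, ?_⟩
  rw [tpowV_smul, hρ, castV_smul]

def IsSmulTpow {a m : ℕ} (w : Vnm n a) (x : Vnm n m) : Prop :=
  ∃ (f : ℕ) (γ : ℂ) (h : f * a = m), x = γ • castV h (tpowV w f)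

namespace IsSmulTpow

lemma refl {a : ℕ} (w : Vnm n a) : IsSmulTpow w w :=
  ⟨1, 1, Nat.one_mul a, by rw [castV_tpowV_one, one_smul]⟩

lemma smul {a m : ℕ} {w : Vnm n a} {x : Vnm n m} (hx : IsSmulTpow w x) (c : ℂ) :
    IsSmulTpow w (c • x) := by
  obtain ⟨f, γ, h, rfl⟩ := hx
  exact ⟨f, c * γ, h, smul_smul c γ _⟩

lemma tensV {a m l : ℕ} {w : Vnm n a} {x : Vnm n m} {y : Vnm n l} (hx : IsSmulTpow w x)
    (hy : IsSmulTpow w y) : IsSmulTpow w (_root_.tensV x y) := by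
  obtain ⟨f₁, γ₁, h₁, rfl⟩ := hx
  obtain ⟨f₂, γ₂, h₂, rfl⟩ := hy
  exact ⟨_, _, _, tensV_smul_castV_tpowV w γ₁ γ₂ h₁ h₂⟩

end IsSmulTpow

lemma exists_eq_smul_of_tensV_comm {m : ℕ} {x y : Vnm n m} {c : ℂ} (hx : x ≠ 0)
    (h : tensV y x = c • tensV x y) : ∃ γ : ℂ, y = γ • x := by
  obtain ⟨J, hJ⟩ := Vnm.exists_apply_ne_zero hx
  refine ⟨c * y J / x J, PiLp.ext fun A => ?_⟩
  have hA : y A * x J = c * (x A * y J) := by simpa using congrArg (· (Fin.append A J)) h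
  rw [PiLp.smul_apply, smul_eq_mul, div_mul_eq_mul_div, eq_div_iff hJ]
  linear_combination hA

lemma exists_eq_tensV_of_tensV_comm {m k : ℕ} {x : Vnm n m} {y : Vnm n (m + k)} {c : ℂ}
    (hx : x ≠ 0) (h : tensV y x = c • castV (Nat.add_comm m (m + k)) (tensV x y)) :
    ∃ y' : Vnm n k, y = tensV x y' := by
  obtain ⟨J, hJ⟩ := Vnm.exists_apply_ne_zero hx
  let ŷ := castV (Nat.add_comm m k) y
  have hABC : ∀ A B C, y (Fin.append A B) * x C = c * (x A * ŷ (Fin.append B C)) := by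
    intro A B C
    have := congrArg (· (Fin.append (Fin.append A B) C)) h
    simp only [tensV_append, PiLp.smul_apply, smul_eq_mul, castV_apply, Fin.append_assoc] at this
    rw [this, castV_apply, ← tensV_append, Fin.append_cast_right]
    rfl
  refine ⟨WithLp.toLp 2 fun B => c * ŷ (Fin.append B J) / x J, Vnm.ext_append fun A B => ?_⟩
  rw [tensV_append, PiLp.toLp_apply, mul_div_assoc', eq_div_iff hJ]
  linear_combination hABC A B J

lemma tensV_comm_of_tensV_left {m k : ℕ} {x : Vnm n m} {y : Vnm n k} {c : ℂ} (hx : x ≠ 0)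
    (h : tensV (tensV x y) x = c • castV (Nat.add_comm m (m + k)) (tensV x (tensV x y))) :
    tensV y x = c • castV (Nat.add_comm m k) (tensV x y) := by
  apply tensV_left_injective hx
  apply castV_injective (Nat.add_assoc m k m).symm
  rw [← tensV_assoc, h, tensV_smul_right, tensV_castV_right, castV_smul, castV_castV]

lemma tensV_comm_symm {m l : ℕ} {x : Vnm n m} {y : Vnm n l} {c : ℂ} (hc : c ≠ 0)
    (h : tensV y x = c • castV (Nat.add_comm m l) (tensV x y)) :
    tensV x y = c⁻¹ • castV (Nat.add_comm l m) (tensV y x) := by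
  rw [h, castV_smul, castV_castV, castV_self, smul_smul, inv_mul_cancel₀ hc, one_smul]

theorem tensV_comm_isSmulTpow {m l : ℕ} {x : Vnm n m} {y : Vnm n l} {c : ℂ} (hm : 1 ≤ m)
    (hl : 1 ≤ l) (hx : ‖x‖ = 1) (hy : ‖y‖ = 1)
    (h : tensV y x = c • castV (Nat.add_comm m l) (tensV x y)) :
    c = 1 ∧ ∃ (a : ℕ) (w : Vnm n a), ‖w‖ = 1 ∧ IsSmulTpow w x ∧ IsSmulTpow w y := by
  obtain ⟨N, hN⟩ : ∃ N, m + l = N := ⟨_, rfl⟩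
  induction N using Nat.strong_induction_on generalizing m l x y c with
  | _ N ih =>
  wlog hml : m ≤ l generalizing m l x y c
  · have hc : c ≠ 0 := by
      rintro rfl
      simpa [norm_tensV, hx, hy] using congrArg norm h
    obtain ⟨hc', a, w, hw, hyw, hxw⟩ :=
      this hl hm hy hx (tensV_comm_symm hc h) (by omega) (by omega)
    exact ⟨inv_eq_one.mp hc', a, w, hw, hxw, hyw⟩
  have hx0 : x ≠ 0 := by rintro rfl; simp at hx
  rcases hml.eq_or_lt with rfl | hlt
  · rw [castV_self] at h
    obtain ⟨γ, rfl⟩ := exists_eq_smul_of_tensV_comm hx0 h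
    refine ⟨?_, m, x, hx, .refl x, (IsSmulTpow.refl x).smul γ⟩
    have hv : γ • tensV x x ≠ 0 := by
      rw [← tensV_smul_left, ← norm_ne_zero_iff, norm_tensV, hy, hx]
      norm_num
    rw [tensV_smul_left, tensV_smul_right] at h
    exact (smul_left_injective ℂ hv ((one_smul ℂ _).trans h)).symm
  obtain ⟨k, rfl⟩ := Nat.exists_eq_add_of_le hlt.le
  obtain ⟨y, rfl⟩ := exists_eq_tensV_of_tensV_comm hx0 h
  have hy' : ‖y‖ = 1 := by simpa [norm_tensV, hx] using hy
  obtain ⟨hc, a, w, hw, hxw, hyw⟩ :=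
    ih (m + k) (by omega) hm (by omega) hx hy' (tensV_comm_of_tensV_left hx0 h) rfl
  exact ⟨hc, a, w, hw, hxw, hxw.tensV hyw⟩

end

/-- if `y ⊗ x = c · (x ⊗ y)` with `|c| = 1`, then `x` and `y` are
powers of a common unit vector `w` up to phases; in particular `x ⊗ y` is periodic
and `c = 1`. -/
theorem subCuntz_stmt6 {n m l : ℕ} (hm : 1 ≤ m) (hl : 1 ≤ l)
    (x : Vnm n m) (y : Vnm n l) (hx : ‖x‖ = 1) (hy : ‖y‖ = 1)
    (c : ℂ)
    (heq : tensV y x = c • castV (by omega : m + l = l + m) (tensV x y)) :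
    (∃ (a : ℕ) (w : Vnm n a) (f₁ f₂ : ℕ) (γ₁ γ₂ : ℂ)
        (h₁ : f₁ * a = m) (h₂ : f₂ * a = l),
      1 ≤ a ∧ ‖w‖ = 1 ∧ 1 ≤ f₁ ∧ 1 ≤ f₂ ∧ ‖γ₁‖ = 1 ∧ ‖γ₂‖ = 1 ∧
      x = γ₁ • castV h₁ (tpowV w f₁) ∧ y = γ₂ • castV h₂ (tpowV w f₂)) ∧
    PeriodicV (tensV x y) ∧ c = 1 := by
  obtain ⟨hc, a, w, hw, ⟨f₁, γ₁, h₁, rfl⟩, ⟨f₂, γ₂, h₂, rfl⟩⟩ :=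
    tensV_comm_isSmulTpow hm hl hx hy heq
  rw [norm_smul_castV_tpowV hw] at hx hy
  have hpos : 1 ≤ a ∧ 1 ≤ f₁ ∧ 1 ≤ f₂ := by
    subst h₁ h₂
    exact ⟨Nat.pos_of_mul_pos_left hm, Nat.pos_of_mul_pos_right hm, Nat.pos_of_mul_pos_right hl⟩
  refine ⟨⟨a, w, f₁, f₂, γ₁, γ₂, h₁, h₂, hpos.1, hw, hpos.2.1, hpos.2.2, hx, hy, rfl, rfl⟩, ?_, hc⟩
  rw [tensV_smul_castV_tpowV]
  exact periodicV_smul_castV_tpowV hw (by rw [norm_mul, hx, hy, one_mul]) _ (by omega)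
end
end
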